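/- arXiv:1805.09161 — 4 statements merged into one kernel-verified Lean document; each statement's English description precedes it below -/
import Mathlib

section
/- Let b be a complex number with Im b > 0 and let c > 0 be real. Then ∫_ℝ e^{icξ}/(ξ − b)² dξ = −2πc·e^{icb}. -/
/-!
For `Im b > 0` the function `rampExp b x = x e^{2πibx}` on `x ≥ 0`, extended by zero, is
continuous and integrable, and the Laplace transform `∫₀^∞ x e^{-sx} dx = 1/s²` (`Re s > 0`) gives
`𝓕 (rampExp b) ξ = 1/(2πi(ξ - b))² = -1/(4π²(ξ - b)²)`, again integrable. Fourier inversion at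
`c/(2π)` turns the integral into `-4π² rampExp b (c/(2π)) = -2πc e^{icb}`.
-/

open MeasureTheory Filter Topology

open Complex Set FourierTransform

lemma norm_cexp_neg_mul_ofReal (s : ℂ) (x : ℝ) :
    ‖cexp (-(s * x))‖ = Real.exp (-(s.re * x)) := by
  simp [Complex.norm_exp]

lemma integrableOn_Ioi_mul_cexp_neg_mul {s : ℂ} (hs : 0 < s.re) :
    IntegrableOn (fun x : ℝ => x * cexp (-(s * x))) (Ioi 0) := by
  have hreal : IntegrableOn (fun x : ℝ => x * Real.exp (-(s.re * x))) (Ioi 0) := by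
    simpa using integrableOn_rpow_mul_exp_neg_mul_rpow (s := 1) (p := 1)
      (by norm_num) zero_lt_one hs
  refine hreal.mono' (by fun_prop) ?_
  filter_upwards [ae_restrict_mem measurableSet_Ioi] with x hx
  rw [norm_mul, norm_cexp_neg_mul_ofReal, Complex.norm_real, Real.norm_of_nonneg hx.le]

lemma tendsto_mul_cexp_neg_mul_atTop {s : ℂ} (hs : 0 < s.re) :
    Tendsto (fun x : ℝ => x * cexp (-(s * x))) atTop (𝓝 0) := by
  rw [tendsto_zero_iff_norm_tendsto_zero]
  refine (tendsto_rpow_mul_exp_neg_mul_atTop_nhds_zero 1 _ hs).congr' ?_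
  filter_upwards [eventually_ge_atTop 0] with x hx
  rw [norm_mul, norm_cexp_neg_mul_ofReal, Complex.norm_real, Real.norm_of_nonneg hx,
    Real.rpow_one, neg_mul]

lemma tendsto_cexp_neg_mul_atTop {s : ℂ} (hs : 0 < s.re) :
    Tendsto (fun x : ℝ => cexp (-(s * x))) atTop (𝓝 0) := by
  rw [Complex.tendsto_exp_nhds_zero_iff]
  simpa using tendsto_id.const_mul_atTop hs

lemma integral_Ioi_mul_cexp_neg_mul {s : ℂ} (hs : 0 < s.re) :
    ∫ x in Ioi (0 : ℝ), x * cexp (-(s * x)) = 1 / s ^ 2 := by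
  have hs0 : s ≠ 0 := fun h => by simp [h] at hs
  have hderiv (x : ℝ) : HasDerivAt (fun x : ℝ => -((x / s + 1 / s ^ 2) * cexp (-(s * x))))
      (x * cexp (-(s * x))) x := by
    have hlin := ((hasDerivAt_id x).ofReal_comp.div_const s).add_const (1 / s ^ 2)
    have hexp : HasDerivAt (fun x : ℝ => cexp (-(s * x))) (cexp (-(s * x)) * -s) x := by
      simpa using ((hasDerivAt_id x).ofReal_comp.const_mul s).neg.cexp
    refine (hlin.fun_mul hexp).fun_neg.congr_deriv ?_
    simp only [id, ofReal_one]
    field_simp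
    ring
  have hlim : Tendsto (fun x : ℝ => -((x / s + 1 / s ^ 2) * cexp (-(s * x)))) atTop (𝓝 0) := by
    have := ((tendsto_mul_cexp_neg_mul_atTop hs).div_const s).add
      ((tendsto_cexp_neg_mul_atTop hs).const_mul (1 / s ^ 2))
    simpa [add_mul, div_mul_eq_mul_div] using this.neg
  rw [integral_Ioi_of_hasDerivAt_of_tendsto' (fun x _ => hderiv x)
    (integrableOn_Ioi_mul_cexp_neg_mul hs) hlim]
  simp

noncomputable def rampExp (b : ℂ) : ℝ → ℂ :=
  indicator (Ici 0) fun x => x * cexp (2 * Real.pi * I * b * x)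

lemma continuous_rampExp (b : ℂ) : Continuous (rampExp b) := by
  have : rampExp b = fun x : ℝ => if 0 ≤ x then x * cexp (2 * Real.pi * I * b * x) else 0 := by
    ext x
    simp [rampExp, indicator_apply]
  rw [this]
  refine continuous_if_le continuous_const continuous_id (Continuous.continuousOn ?_)
    continuousOn_const fun x hx => by simp [← hx]
  fun_prop

lemma two_pi_mul_I_mul_ofReal_sub_re (b : ℂ) (ξ : ℝ) :
    (2 * Real.pi * I * (ξ - b)).re = 2 * Real.pi * b.im := by
  simp [Complex.mul_re, Complex.mul_im]

lemma integrable_rampExp {b : ℂ} (hb : 0 < b.im) : Integrable (rampExp b) := by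
  have hs : 0 < (2 * Real.pi * I * ((0 : ℝ) - b)).re := by
    rw [two_pi_mul_I_mul_ofReal_sub_re]
    positivity
  rw [rampExp, integrable_indicator_iff measurableSet_Ici, integrableOn_Ici_iff_integrableOn_Ioi]
  refine (integrableOn_Ioi_mul_cexp_neg_mul hs).congr_fun (fun x _ => ?_) measurableSet_Ioi
  push_cast
  ring_nf

lemma fourier_rampExp {b : ℂ} (hb : 0 < b.im) (ξ : ℝ) :
    𝓕 (rampExp b) ξ = 1 / (2 * Real.pi * I * (ξ - b)) ^ 2 := by
  have hs : 0 < (2 * Real.pi * I * (ξ - b)).re := by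
    rw [two_pi_mul_I_mul_ofReal_sub_re]
    positivity
  rw [Real.fourier_real_eq_integral_exp_smul, ← integral_Ioi_mul_cexp_neg_mul hs,
    ← integral_Ici_eq_integral_Ioi, ← integral_indicator measurableSet_Ici]
  congr 1 with x
  by_cases hx : 0 ≤ x
  · simp only [rampExp, indicator_of_mem (mem_Ici.2 hx), smul_eq_mul]
    rw [mul_left_comm, ← Complex.exp_add]
    push_cast
    ring_nf
  · simp [rampExp, hx]

lemma norm_one_div_ofReal_sub_sq (b : ℂ) (ξ : ℝ) :
    ‖1 / ((ξ : ℂ) - b) ^ 2‖ = ((ξ - b.re) ^ 2 + b.im ^ 2)⁻¹ := by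
  rw [norm_div, norm_one, norm_pow, Complex.sq_norm, Complex.normSq_apply, one_div]
  simp [sq]

lemma integrable_one_div_ofReal_sub_sq {b : ℂ} (hb : b.im ≠ 0) :
    Integrable fun ξ : ℝ => 1 / ((ξ : ℂ) - b) ^ 2 := by
  have hmaj : Integrable fun ξ : ℝ => ((ξ - b.re) ^ 2 + b.im ^ 2)⁻¹ := by
    refine ((integrable_inv_one_add_sq.comp_div hb).comp_sub_right b.re |>.const_mul
      (b.im ^ 2)⁻¹).congr (.of_forall fun ξ => ?_)
    field_simp
    ring
  exact hmaj.mono' (by fun_prop : Measurable _).aestronglyMeasurable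
    (.of_forall fun ξ => (norm_one_div_ofReal_sub_sq b ξ).le)

lemma integrable_fourier_rampExp {b : ℂ} (hb : 0 < b.im) : Integrable (𝓕 (rampExp b)) := by
  rw [funext (fourier_rampExp hb)]
  refine ((integrable_one_div_ofReal_sub_sq hb.ne').const_mul (1 / (2 * Real.pi * I) ^ 2)).congr
    (.of_forall fun ξ => ?_)
  simp only [mul_pow, one_div, mul_inv]

lemma ofReal_sub_ne_zero {b : ℂ} (hb : b.im ≠ 0) (ξ : ℝ) : (ξ : ℂ) - b ≠ 0 :=
  fun h => hb (by simpa using congrArg Complex.im h)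

lemma integral_cexp_mul_div_ofReal_sub_sq {b : ℂ} (hb : 0 < b.im) (c : ℝ) :
    ∫ ξ : ℝ, cexp (I * c * ξ) / ((ξ : ℂ) - b) ^ 2
      = -(4 * Real.pi ^ 2) * rampExp b (c / (2 * Real.pi)) := by
  have hinv := (continuous_rampExp b).fourierInv_fourier_eq (integrable_rampExp hb)
    (integrable_fourier_rampExp hb)
  rw [← congrFun hinv, Real.fourierInv_eq', ← integral_const_mul]
  congr 1 with ξ
  have hξ := ofReal_sub_ne_zero hb.ne' ξ
  rw [fourier_rampExp hb, smul_eq_mul, Real.inner_apply]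
  push_cast
  field_simp
  linear_combination 4 * I_sq

/-- Residue-theorem evaluation in the degenerate (double pole) case: for
`b : ℂ` with `Im b > 0` and `c > 0`, `∫_ℝ e^{icξ}/(ξ − b)² dξ = −2πc e^{icb}`. -/
theorem residue_integral_double_pole (b : ℂ) (hb : 0 < b.im) (c : ℝ) (hc : 0 < c) :
    ∫ ξ : ℝ, Complex.exp (Complex.I * (c : ℂ) * (ξ : ℂ)) / ((ξ : ℂ) - b) ^ 2
      = -(2 * (Real.pi : ℂ) * (c : ℂ)) * Complex.exp (Complex.I * (c : ℂ) * b) := by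
  rw [integral_cexp_mul_div_ofReal_sub_sq hb, rampExp,
    indicator_of_mem (mem_Ici.2 (by positivity))]
  push_cast
  field_simp
  ring
end

section
/- Let g, κ, τ, s, m be real numbers with m ≥ 0 and 1 + τ > 0, and set κ' := κ(1+m)/(2(1+τ)). Assume |κ'|·(2|g| + |κ'|) < (1−s)(1+m). Define z := (1 + τ + ig)² − (1 − s − iκ)(1+m) ∈ ℂ and let r := z^{1/2} be the principal square root. Then Re r < 1 + τ. -/
open Complex

/-!
Since `κ (1 + m) = 2 (1 + τ) κ'`, completing the square gives `z = (1 + τ + i (g + κ'))² - c`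
with `c = (1 - s)(1 + m) - 2gκ' - κ'² > 0` by the hypothesis. Squaring maps the line
`Re w = a` onto the parabola `Re w = a² - (Im w)² / (4a²)`, and the principal square root has
real part `< a` exactly to the left of it; subtracting `c > 0` moves `(a + it)²` there.
-/

theorem Complex.re_cpow_inv_two_lt {z : ℂ} {a : ℝ} (ha : 0 < a)
    (h : z.im ^ 2 < 4 * a ^ 2 * (a ^ 2 - z.re)) : (z ^ (2⁻¹ : ℂ)).re < a := by
  have hgap : 0 < a ^ 2 - z.re :=
    pos_of_mul_pos_right ((sq_nonneg _).trans_lt h) (by positivity)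
  have hnorm : ‖z‖ < 2 * a ^ 2 - z.re := by
    rw [norm_def, Real.sqrt_lt' (by nlinarith), normSq_apply]
    nlinarith
  rw [cpow_inv_two_re, Real.sqrt_lt' ha]
  linarith

theorem Complex.re_cpow_inv_two_sq_sub_lt {a c : ℝ} (ha : 0 < a) (hc : 0 < c) (y : ℝ) :
    (((a + y * I) ^ 2 - c) ^ (2⁻¹ : ℂ)).re < a := by
  refine re_cpow_inv_two_lt ha ?_
  simp only [sq, sub_re, sub_im, add_re, add_im, mul_re, mul_im, ofReal_re, ofReal_im, I_re, I_im]
  nlinarith [mul_pos ha ha]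

theorem perturbed_root_re_lt_general (g κ τ s m : ℝ) (hτ : 0 < 1 + τ)
    (κ' : ℝ) (hκ' : κ' = κ * (1 + m) / (2 * (1 + τ)))
    (hyp : |κ'| * (2 * |g| + |κ'|) < (1 - s) * (1 + m))
    (z : ℂ) (hz : z = (1 + (τ : ℂ) + Complex.I * (g : ℂ)) ^ 2
      - (1 - (s : ℂ) - Complex.I * (κ : ℂ)) * (1 + (m : ℂ)))
    (r : ℂ) (hr : r = z ^ ((1 : ℂ) / 2)) :
    r.re < 1 + τ := by
  have hκ : κ * (1 + m) = 2 * (1 + τ) * κ' := by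
    rw [hκ']; field_simp
  have hκℂ : (κ : ℂ) * (1 + m) = 2 * (1 + τ) * κ' := by exact_mod_cast hκ
  have hz' : z = ((1 + τ : ℝ) + (g + κ' : ℝ) * I) ^ 2
      - ((1 - s) * (1 + m) - 2 * g * κ' - κ' ^ 2 : ℝ) := by
    rw [hz]; push_cast
    linear_combination I * hκℂ - (2 * g * κ' + κ' ^ 2) * I_sq
  have hc : 0 < (1 - s) * (1 + m) - 2 * g * κ' - κ' ^ 2 := by
    nlinarith [le_abs_self (g * κ'), abs_mul g κ', sq_abs κ']
  rw [hr, one_div, hz']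
  exact re_cpow_inv_two_sq_sub_lt hτ hc _

/-- Key computation for the `h`-perturbed symbol: with `τ` playing the role of `hF`,
`κ` of `h·ξ'(K)`, `g` of `g₀(df,ξ')`, `m` of `|df|²`, `s` of `|ξ'|²`, if
`|κ'|(2|g| + |κ'|) < (1−s)(1+m)` where `κ' = κ(1+m)/(2(1+τ))`, then the principal
square root `r` of `z = (1 + τ + ig)² − (1 − s − iκ)(1+m)` satisfies `Re r < 1 + τ`. -/
theorem perturbed_root_re_lt (g κ τ s m : ℝ) (hm : 0 ≤ m) (hτ : 0 < 1 + τ)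
    (κ' : ℝ) (hκ' : κ' = κ * (1 + m) / (2 * (1 + τ)))
    (hyp : |κ'| * (2 * |g| + |κ'|) < (1 - s) * (1 + m))
    (z : ℂ) (hz : z = (1 + (τ : ℂ) + Complex.I * (g : ℂ)) ^ 2
      - (1 - (s : ℂ) - Complex.I * (κ : ℂ)) * (1 + (m : ℂ)))
    (r : ℂ) (hr : r = z ^ ((1 : ℂ) / 2)) :
    r.re < 1 + τ :=
  perturbed_root_re_lt_general g κ τ s m hτ κ' hκ' hyp z hz r hr
end

section
/- For every δ ∈ (0,1] and all constants F₀, K₀, m₀ ≥ 0 there exist ε > 0 and h₀ > 0 such that for all real numbers h, F, κ, s, m with 0 < h < h₀, |F| ≤ F₀, |κ| ≤ K₀, 0 ≤ m ≤ m₀ and s ≥ m/(1+m) + δ, one has (1 + hF)² ≥ ε + (1 − s)(1+m) + h²·((1+m)κ/(2(1+hF)))². -/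
set_option maxHeartbeats 1000000 in
/-- Branch-cut avoidance estimate: for every `δ ∈ (0,1]` and constants
`F₀, K₀, m₀ ≥ 0` there exist `ε > 0` and `h₀ > 0` such that for all reals
`h, F, κ, s, m` with `0 < h < h₀`, `|F| ≤ F₀`, `|κ| ≤ K₀`, `0 ≤ m ≤ m₀` and
`s ≥ m/(1+m) + δ`, one has
`(1 + hF)² ≥ ε + (1 − s)(1+m) + h²((1+m)κ/(2(1+hF)))²`. -/
theorem branch_cut_avoidance (δ F₀ K₀ m₀ : ℝ) (hδ0 : 0 < δ) (hδ1 : δ ≤ 1)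
    (hF₀ : 0 ≤ F₀) (hK₀ : 0 ≤ K₀) (hm₀ : 0 ≤ m₀) :
    ∃ ε > 0, ∃ h₀ > 0, ∀ h F κ s m : ℝ,
      0 < h → h < h₀ → |F| ≤ F₀ → |κ| ≤ K₀ → 0 ≤ m → m ≤ m₀ →
      m / (1 + m) + δ ≤ s →
      ε + (1 - s) * (1 + m) + h ^ 2 * ((1 + m) * κ / (2 * (1 + h * F))) ^ 2
        ≤ (1 + h * F) ^ 2 := by
  refine ⟨δ / 2, by linarith, min 1 (min (1 / (2 * F₀ + 1))
    (min (δ / (8 * F₀ + 1)) (δ / (4 * (1 + m₀) ^ 2 * K₀ ^ 2 + 1)))),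
    by positivity, ?_⟩
  intro h F κ s m hh0 hh hF hκ hm0 hm1 hs
  have h1 : h < 1 := lt_of_lt_of_le hh (min_le_left _ _)
  have h2 : h < 1 / (2 * F₀ + 1) :=
    lt_of_lt_of_le hh (le_trans (min_le_right _ _) (min_le_left _ _))
  have h3 : h < δ / (8 * F₀ + 1) :=
    lt_of_lt_of_le hh (le_trans (min_le_right _ _)
      (le_trans (min_le_right _ _) (min_le_left _ _)))
  have h4 : h < δ / (4 * (1 + m₀) ^ 2 * K₀ ^ 2 + 1) :=
    lt_of_lt_of_le hh (le_trans (min_le_right _ _)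
      (le_trans (min_le_right _ _) (min_le_right _ _)))
  clear hh
  have hFabs : -F₀ ≤ F ∧ F ≤ F₀ := abs_le.mp hF
  have hκabs : -K₀ ≤ κ ∧ κ ≤ K₀ := abs_le.mp hκ
  -- h * F₀ < 1/2
  have hhF₀ : h * F₀ < 1 / 2 := by
    have h2' : h * (2 * F₀ + 1) < 1 := (lt_div_iff₀ (by positivity)).mp h2
    nlinarith
  have hD : (1:ℝ)/2 < 1 + h * F := by nlinarith [hFabs.1]
  -- bound the division term
  have hDsq : (1:ℝ) ≤ (2 * (1 + h * F)) ^ 2 := by nlinarith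
  have hq : ((1 + m) * κ / (2 * (1 + h * F))) ^ 2 ≤ ((1 + m) * κ) ^ 2 := by
    rw [div_pow]
    exact div_le_self (sq_nonneg _) hDsq
  have hq2 : ((1 + m) * κ) ^ 2 ≤ ((1 + m₀) * K₀) ^ 2 := by
    have h5 : |(1 + m) * κ| ≤ (1 + m₀) * K₀ := by
      rw [abs_mul]
      apply mul_le_mul _ hκ (abs_nonneg _) (by linarith)
      rw [abs_of_nonneg (by linarith)]; linarith
    calc ((1 + m) * κ) ^ 2 = |(1 + m) * κ| ^ 2 := (sq_abs _).symm
      _ ≤ ((1 + m₀) * K₀) ^ 2 := by nlinarith [abs_nonneg ((1 + m) * κ)]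
  have hT : h ^ 2 * ((1 + m) * κ / (2 * (1 + h * F))) ^ 2 ≤ δ / 4 := by
    have e1 : h ^ 2 * ((1 + m) * κ / (2 * (1 + h * F))) ^ 2
        ≤ h ^ 2 * ((1 + m₀) * K₀) ^ 2 :=
      mul_le_mul_of_nonneg_left (le_trans hq hq2) (sq_nonneg h)
    have hhle : h ^ 2 ≤ h := by nlinarith [mul_le_mul_of_nonneg_right h1.le hh0.le]
    have e2 : h ^ 2 * ((1 + m₀) * K₀) ^ 2 ≤ h * ((1 + m₀) * K₀) ^ 2 :=
      mul_le_mul_of_nonneg_right hhle (sq_nonneg _)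
    have h4' : h * (4 * (1 + m₀) ^ 2 * K₀ ^ 2 + 1) < δ :=
      (lt_div_iff₀ (by positivity)).mp h4
    have hring : ((1 + m₀) * K₀) ^ 2 = (1 + m₀) ^ 2 * K₀ ^ 2 := by ring
    have h4'' : h * ((1 + m₀) * K₀) ^ 2 ≤ δ / 4 := by
      rw [hring]; linarith
    linarith
  -- (1-s)(1+m) ≤ 1 - δ
  have hS : (1 - s) * (1 + m) ≤ 1 - δ := by
    have hmpos : (0:ℝ) < 1 + m := by linarith
    have : m / (1 + m) * (1 + m) = m := div_mul_cancel₀ _ (ne_of_gt hmpos)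
    nlinarith
  -- 2 h F₀ ≤ δ/4
  have hRHS : 1 - δ / 4 ≤ (1 + h * F) ^ 2 := by
    have h3' : h * (8 * F₀ + 1) < δ := (lt_div_iff₀ (by positivity)).mp h3
    have hF' : h * (-F₀) ≤ h * F := mul_le_mul_of_nonneg_left hFabs.1 hh0.le
    nlinarith [sq_nonneg (h * F)]
  linarith
end

section
/- Let n ≥ 2 and fix constants 0 < c' < 1 and M > 0. Then there exists δ > 0 such that for all ξ₁ ∈ ℝ and all v, ξ' ∈ ℝ^{n−1} with ‖ξ'‖² ≤ c' and ‖v‖ ≤ M, the complex number ξ₁² − 2ξ₁·(i − ⟨v,ξ'⟩)/(1 + ‖v‖²) − (1 − ‖ξ'‖²)/(1 + ‖v‖²) has modulus at least δ. -/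
/-!
After multiplication by `1 + ‖v‖²` the symbol becomes
`w = (1 + ‖v‖²) ξ₁² + 2 ⟨v, ξ'⟩ ξ₁ - (1 - ‖ξ'‖²) - 2 i ξ₁`.
For `|ξ₁| ≥ t` the imaginary part gives `‖w‖ ≥ 2t`. For `|ξ₁| < t ≤ 1` the first two terms of the
real part are at most `(1 + M)² |ξ₁|`, so for `t` small the real part stays below `-(1 - c') / 2`.
-/

open Complex

theorem min_le_norm_of_mul_le_abs_im {z : ℂ} {c u t ε : ℝ} (hc : 0 ≤ c) (him : c * u ≤ |z.im|)
    (hre : u < t → z.re ≤ -ε) : min (c * t) ε ≤ ‖z‖ := by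
  rcases lt_or_ge u t with hut | htu
  · calc min (c * t) ε ≤ ε := min_le_right _ _
      _ ≤ |z.re| := by linarith [hre hut, neg_abs_le z.re]
      _ ≤ ‖z‖ := abs_re_le_norm z
  · calc min (c * t) ε ≤ c * u := (min_le_left _ _).trans (by gcongr)
      _ ≤ ‖z‖ := him.trans (abs_im_le_norm z)

theorem symbol_eq_mk_div (ξ₁ a b s : ℝ) :
    (ξ₁ : ℂ) ^ 2 - 2 * ξ₁ * (I - a) / (1 + (b : ℂ) ^ 2) - (1 - (s : ℂ) ^ 2) / (1 + (b : ℂ) ^ 2) =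
      (⟨(1 + b ^ 2) * ξ₁ ^ 2 + 2 * a * ξ₁ - (1 - s ^ 2), -2 * ξ₁⟩ : ℂ) / ((1 + b ^ 2 : ℝ) : ℂ) := by
  have hD : (1 + (b : ℂ) ^ 2) ≠ 0 := mod_cast (by positivity : (1 + b ^ 2 : ℝ) ≠ 0)
  rw [mk_eq_add_mul_I]
  push_cast
  field_simp
  ring

theorem one_add_sq_mul_sq_add_le {ξ a b M : ℝ} (hξ : |ξ| ≤ 1) (hb : 0 ≤ b) (hbM : b ≤ M)
    (ha : |a| ≤ M) : (1 + b ^ 2) * ξ ^ 2 + 2 * a * ξ ≤ (1 + M) ^ 2 * |ξ| := by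
  have hξ2 : ξ ^ 2 ≤ |ξ| := by nlinarith [sq_abs ξ, abs_nonneg ξ]
  have haξ : a * ξ ≤ M * |ξ| :=
    calc a * ξ ≤ |a| * |ξ| := abs_mul a ξ ▸ le_abs_self _
      _ ≤ M * |ξ| := by gcongr
  have hbM2 : b ^ 2 ≤ M ^ 2 := by gcongr
  nlinarith [abs_nonneg ξ]

theorem exists_pos_le_norm_symbol {c' M : ℝ} (hc1 : c' < 1) (hM : 0 ≤ M) :
    ∃ δ > 0, ∀ ξ₁ a b s : ℝ, 0 ≤ b → b ≤ M → |a| ≤ M → s ^ 2 ≤ c' →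
      δ ≤ ‖(ξ₁ : ℂ) ^ 2 - 2 * ξ₁ * (I - a) / (1 + (b : ℂ) ^ 2) - (1 - (s : ℂ) ^ 2) / (1 + (b : ℂ) ^ 2)‖ := by
  set ε := 1 - c'
  have hε0 : 0 < ε := sub_pos.mpr hc1
  set t := min 1 (ε / (2 * (1 + M) ^ 2))
  refine ⟨min (2 * t) (ε / 2) / (1 + M ^ 2), by positivity, fun ξ₁ a b s hb hbM ha hs ↦ ?_⟩
  have hw : min (2 * t) (ε / 2) ≤
      ‖(⟨(1 + b ^ 2) * ξ₁ ^ 2 + 2 * a * ξ₁ - (1 - s ^ 2), -2 * ξ₁⟩ : ℂ)‖ := by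
    refine min_le_norm_of_mul_le_abs_im (u := |ξ₁|) zero_le_two (by simp [abs_mul]) fun hξt ↦ ?_
    have hξ1 : |ξ₁| ≤ 1 := hξt.le.trans (min_le_left _ _)
    have htε : (1 + M) ^ 2 * t ≤ ε / 2 := by
      have : t ≤ ε / (2 * (1 + M) ^ 2) := min_le_right _ _
      rw [le_div_iff₀ (by positivity)] at this
      linarith
    have hquad := one_add_sq_mul_sq_add_le hξ1 hb hbM ha
    have hξt' : (1 + M) ^ 2 * |ξ₁| ≤ (1 + M) ^ 2 * t := by gcongr
    dsimp only
    linarith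
  rw [symbol_eq_mk_div, norm_div, norm_real, Real.norm_of_nonneg (by positivity)]
  gcongr

theorem low_frequency_ellipticity_general (n : ℕ)
    (c' M : ℝ) (hc1 : c' < 1) (hM : 0 < M) :
    ∃ δ > 0, ∀ (ξ₁ : ℝ) (v ξ' : EuclideanSpace ℝ (Fin (n - 1))),
      ‖ξ'‖ ^ 2 ≤ c' → ‖v‖ ≤ M →
      δ ≤ ‖((ξ₁ : ℂ) ^ 2
          - 2 * (ξ₁ : ℂ) * (Complex.I - ((inner ℝ v ξ' : ℝ) : ℂ)) / (1 + (‖v‖ : ℂ) ^ 2)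
          - (1 - (‖ξ'‖ : ℂ) ^ 2) / (1 + (‖v‖ : ℂ) ^ 2))‖ := by
  obtain ⟨δ, hδ, hsymbol⟩ := exists_pos_le_norm_symbol hc1 hM.le
  refine ⟨δ, hδ, fun ξ₁ v ξ' hξ' hv ↦ hsymbol ξ₁ _ _ _ (norm_nonneg v) hv ?_ hξ'⟩
  have hξ'1 : ‖ξ'‖ ≤ 1 := by nlinarith [norm_nonneg ξ']
  calc |inner ℝ v ξ'| ≤ ‖v‖ * ‖ξ'‖ := abs_real_inner_le_norm v ξ'
    _ ≤ M * 1 := by gcongr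
    _ = M := mul_one M

/-- Uniform ellipticity of the symbol of the boundary-flattened conjugated
Laplacian on the support of the low-frequency cutoff: for `0 < c' < 1` and
`M > 0` there is `δ > 0` such that for all `ξ₁ ∈ ℝ` and `v, ξ' ∈ ℝ^{n−1}` with
`‖ξ'‖² ≤ c'` and `‖v‖ ≤ M`, the symbol
`ξ₁² − 2ξ₁(i − ⟨v,ξ'⟩)/(1+‖v‖²) − (1−‖ξ'‖²)/(1+‖v‖²)` has modulus at least `δ`. -/
theorem low_frequency_ellipticity (n : ℕ) (hn : 2 ≤ n)
    (c' M : ℝ) (hc0 : 0 < c') (hc1 : c' < 1) (hM : 0 < M) :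
    ∃ δ > 0, ∀ (ξ₁ : ℝ) (v ξ' : EuclideanSpace ℝ (Fin (n - 1))),
      ‖ξ'‖ ^ 2 ≤ c' → ‖v‖ ≤ M →
      δ ≤ ‖((ξ₁ : ℂ) ^ 2
          - 2 * (ξ₁ : ℂ) * (Complex.I - ((inner ℝ v ξ' : ℝ) : ℂ)) / (1 + (‖v‖ : ℂ) ^ 2)
          - (1 - (‖ξ'‖ : ℂ) ^ 2) / (1 + (‖v‖ : ℂ) ^ 2))‖ :=
  low_frequency_ellipticity_general n c' M hc1 hM
end
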